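/- Assume every column of Q is nonzero. Then among all probability vectors π with positive entries, the expected squared Frobenius error E[ ‖ Σ_{t=1}^n (1/(n π_{u_t})) Q^{(u_t)} (Q^{(u_t)})ᵀ − Q Qᵀ ‖_F² ] is minimized by the Length Squared sampling probabilities π_s = ‖Q^{(s)}‖² / Σ_{s'=1}^N ‖Q^{(s')}‖², and the minimal value equals (1/n) [ ( Σ_{s=1}^N ‖Q^{(s)}‖² )² − ‖Q Qᵀ‖_F² ]. -/

import Mathlib

open BigOperators Finset Matrix

private lemma sum_prod_piFin {n N : ℕ} (f : Fin n → Fin N → ℝ) :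
    ∑ u : Fin n → Fin N, ∏ t, f t (u t) = ∏ t, ∑ s, f t s := by
  rw [Finset.prod_univ_sum, Fintype.piFinset_univ]

private lemma exp_one {n N : ℕ} {π : Fin N → ℝ} (hπ : ∑ s, π s = 1)
    (t₀ : Fin n) (h : Fin N → ℝ) :
    ∑ u : Fin n → Fin N, (∏ t, π (u t)) * h (u t₀) = ∑ s, π s * h s := by
  calc ∑ u : Fin n → Fin N, (∏ t, π (u t)) * h (u t₀)
      = ∑ u : Fin n → Fin N, ∏ t, (π (u t) * if t = t₀ then h (u t) else 1) := by
        refine Finset.sum_congr rfl fun u _ => ?_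
        rw [Finset.prod_mul_distrib]
        simp
    _ = ∏ t : Fin n, ∑ s, (π s * if t = t₀ then h s else 1) := by
        exact sum_prod_piFin (fun t s => π s * if t = t₀ then h s else 1)
    _ = ∑ s, π s * h s := by
        have : ∀ t : Fin n, (∑ s, (π s * if t = t₀ then h s else 1))
            = if t = t₀ then (∑ s, π s * h s) else 1 := by
          intro t; by_cases ht : t = t₀ <;> simp [ht, hπ]
        rw [Finset.prod_congr rfl fun t _ => this t]
        simp

private lemma exp_pair {n N : ℕ} {π : Fin N → ℝ} (hπ : ∑ s, π s = 1)
    {t₀ t₁ : Fin n} (hne : t₀ ≠ t₁) (g : Fin N → ℝ) :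
    ∑ u : Fin n → Fin N, (∏ t, π (u t)) * (g (u t₀) * g (u t₁))
      = (∑ s, π s * g s) * (∑ s, π s * g s) := by
  calc ∑ u : Fin n → Fin N, (∏ t, π (u t)) * (g (u t₀) * g (u t₁))
      = ∑ u : Fin n → Fin N, ∏ t,
          (π (u t) * ((if t = t₀ then g (u t) else 1) * (if t = t₁ then g (u t) else 1))) := by
        refine Finset.sum_congr rfl fun u _ => ?_
        rw [Finset.prod_mul_distrib, Finset.prod_mul_distrib]
        simp [mul_assoc]
    _ = ∏ t : Fin n, ∑ s,
          (π s * ((if t = t₀ then g s else 1) * (if t = t₁ then g s else 1))) := by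
        exact sum_prod_piFin (fun t s => π s * ((if t = t₀ then g s else 1) * (if t = t₁ then g s else 1)))
    _ = (∑ s, π s * g s) * (∑ s, π s * g s) := by
        have : ∀ t : Fin n, (∑ s, (π s * ((if t = t₀ then g s else 1) * (if t = t₁ then g s else 1))))
            = (if t = t₀ then (∑ s, π s * g s) else 1) * (if t = t₁ then (∑ s, π s * g s) else 1) := by
          intro t
          by_cases h0 : t = t₀ <;> by_cases h1 : t = t₁
          · exact absurd (h0 ▸ h1) hne
          · simp [h0, h1, hπ, hne, Ne.symm hne]
          · simp [h0, h1, hπ, hne, Ne.symm hne]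
          · simp [h0, h1, hπ]
        rw [Finset.prod_congr rfl fun t _ => this t, Finset.prod_mul_distrib]
        simp

private lemma inner_eval {n N : ℕ} (hn : 0 < n) {π : Fin N → ℝ}
    (hpos : ∀ s, 0 < π s) (hπ : ∑ s, π s = 1) (a : Fin N → ℝ) :
    ∑ u : Fin n → Fin N, (∏ t, π (u t)) *
        ((∑ t, (1 / ((n : ℝ) * π (u t))) * a (u t)) - (∑ s, a s)) ^ 2
      = (1 / (n : ℝ)) * ((∑ s, (a s) ^ 2 / π s) - (∑ s, a s) ^ 2) := by
  have hn' : (n : ℝ) ≠ 0 := Nat.cast_ne_zero.mpr hn.ne'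
  set g : Fin N → ℝ := fun s => (1 / ((n : ℝ) * π s)) * a s with hg
  set m : ℝ := ∑ s, a s with hm
  set μ : ℝ := ∑ s, π s * g s with hμdef
  set ν : ℝ := ∑ s, π s * (g s * g s) with hνdef
  have hμ : μ = m / n := by
    rw [hμdef, hm, Finset.sum_div]
    refine Finset.sum_congr rfl fun s _ => ?_
    have hπs := (hpos s).ne'
    rw [hg]
    field_simp
  have hν : ν = (∑ s, (a s) ^ 2 / π s) / (n : ℝ) ^ 2 := by
    rw [hνdef, Finset.sum_div]
    refine Finset.sum_congr rfl fun s _ => ?_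
    have := (hpos s).ne'
    rw [hg]
    field_simp
  have C0 : ∑ u : Fin n → Fin N, (∏ t, π (u t)) = 1 := by
    rw [sum_prod_piFin (fun _ s => π s)]
    simp [hπ]
  have C1 : ∑ u : Fin n → Fin N, (∏ t, π (u t)) * (∑ t, g (u t)) = n * μ := by
    calc ∑ u : Fin n → Fin N, (∏ t, π (u t)) * (∑ t, g (u t))
        = ∑ u : Fin n → Fin N, ∑ t : Fin n, (∏ t', π (u t')) * g (u t) := by
          refine Finset.sum_congr rfl fun u _ => Finset.mul_sum _ _ _
      _ = ∑ t : Fin n, ∑ u : Fin n → Fin N, (∏ t', π (u t')) * g (u t) := Finset.sum_comm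
      _ = ∑ t : Fin n, μ := Finset.sum_congr rfl fun t _ => exp_one hπ t g
      _ = n * μ := by simp [mul_comm]
  have C2 : ∑ u : Fin n → Fin N, (∏ t, π (u t)) * ((∑ t, g (u t)) * (∑ t, g (u t)))
      = (n : ℝ) * ((n : ℝ) * (μ * μ) + (ν - μ * μ)) := by
    calc ∑ u : Fin n → Fin N, (∏ t, π (u t)) * ((∑ t, g (u t)) * (∑ t, g (u t)))
        = ∑ u : Fin n → Fin N, ∑ t : Fin n, ∑ t' : Fin n,
            (∏ t'', π (u t'')) * (g (u t) * g (u t')) := by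
          refine Finset.sum_congr rfl fun u _ => ?_
          rw [Finset.sum_mul_sum, Finset.mul_sum]
          exact Finset.sum_congr rfl fun t _ => Finset.mul_sum _ _ _
      _ = ∑ t : Fin n, ∑ t' : Fin n, ∑ u : Fin n → Fin N,
            (∏ t'', π (u t'')) * (g (u t) * g (u t')) := by
          rw [Finset.sum_comm]
          exact Finset.sum_congr rfl fun t _ => Finset.sum_comm
      _ = ∑ t : Fin n, ∑ t' : Fin n, (μ * μ + if t' = t then ν - μ * μ else 0) := by
          refine Finset.sum_congr rfl fun t _ => Finset.sum_congr rfl fun t' _ => ?_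
          by_cases h : t' = t
          · subst h
            rw [if_pos rfl]
            have h2 : (∑ u : Fin n → Fin N, (∏ t'' : Fin n, π (u t'')) * (g (u t') * g (u t')))
                = ν := exp_one hπ t' (fun s => g s * g s)
            rw [h2]; ring
          · rw [if_neg h, add_zero]
            exact exp_pair hπ (fun he => h he.symm) g
      _ = (n : ℝ) * ((n : ℝ) * (μ * μ) + (ν - μ * μ)) := by
          have h3 : ∀ t : Fin n, ∑ t' : Fin n, (μ * μ + if t' = t then ν - μ * μ else 0)
              = (n : ℝ) * (μ * μ) + (ν - μ * μ) := by
            intro t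
            rw [Finset.sum_add_distrib, Finset.sum_const, Finset.card_univ, Fintype.card_fin,
              nsmul_eq_mul]
            simp [Finset.sum_ite_eq']
          rw [Finset.sum_congr rfl fun t _ => h3 t, Finset.sum_const, Finset.card_univ,
            Fintype.card_fin, nsmul_eq_mul]
  have step1 : ∑ u : Fin n → Fin N, (∏ t, π (u t)) * ((∑ t, g (u t)) - m) ^ 2
      = (∑ u : Fin n → Fin N, (∏ t, π (u t)) * ((∑ t, g (u t)) * (∑ t, g (u t))))
        - 2 * m * (∑ u : Fin n → Fin N, (∏ t, π (u t)) * (∑ t, g (u t)))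
        + m ^ 2 * (∑ u : Fin n → Fin N, (∏ t, π (u t))) := by
    rw [Finset.mul_sum Finset.univ (fun u : Fin n → Fin N => (∏ t, π (u t)) * (∑ t, g (u t))) (2 * m),
      Finset.mul_sum Finset.univ (fun u : Fin n → Fin N => (∏ t, π (u t))) (m ^ 2),
      ← Finset.sum_sub_distrib, ← Finset.sum_add_distrib]
    exact Finset.sum_congr rfl fun u _ => by ring
  calc ∑ u : Fin n → Fin N, (∏ t, π (u t)) *
        ((∑ t, (1 / ((n : ℝ) * π (u t))) * a (u t)) - (∑ s, a s)) ^ 2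
      = ∑ u : Fin n → Fin N, (∏ t, π (u t)) * ((∑ t, g (u t)) - m) ^ 2 := rfl
    _ = (n : ℝ) * ((n : ℝ) * (μ * μ) + (ν - μ * μ)) - 2 * m * ((n : ℝ) * μ) + m ^ 2 * 1 := by
        rw [step1, C0, C1, C2]
    _ = (1 / (n : ℝ)) * ((∑ s, (a s) ^ 2 / π s) - (∑ s, a s) ^ 2) := by
        rw [hμ, hν, ← hm]
        field_simp
        ring


/-- Assume every column of `Q` is nonzero. Among all probability vectors `π` with positive
entries, the expected squared Frobenius error
`E π = E[ ‖ ∑_t (1/(n π_{u_t})) Q^{(u_t)} (Q^{(u_t)})ᵀ − Q Qᵀ ‖_F² ]`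
(expectation over the i.i.d. indices drawn with probabilities `π`, modeled by the
finite product distribution on `Fin n → Fin N`) is minimized by the Length Squared
sampling probabilities `πLS s = ‖Q^{(s)}‖² / ∑_{s'} ‖Q^{(s')}‖²`, and the minimal value
equals `(1/n) [ (∑_s ‖Q^{(s)}‖²)² − ‖Q Qᵀ‖_F² ]`. -/
theorem ls_sampling_minimizes_frobenius_error
    (K N n : ℕ) (hK : 0 < K) (hN : 0 < N) (hn : 0 < n)
    (Q : Matrix (Fin K) (Fin N) ℝ)
    (hQ : ∀ s : Fin N, ∃ i : Fin K, Q i s ≠ 0)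
    (E : (Fin N → ℝ) → ℝ)
    (hE : ∀ π : Fin N → ℝ,
      E π = ∑ u : Fin n → Fin N, (∏ t : Fin n, π (u t)) *
        ∑ i : Fin K, ∑ j : Fin K,
          ((∑ t : Fin n, (1 / ((n : ℝ) * π (u t))) * (Q i (u t) * Q j (u t)))
            - (Q * Qᵀ) i j) ^ 2)
    (πLS : Fin N → ℝ)
    (hπLS : ∀ s : Fin N,
      πLS s = (∑ i : Fin K, Q i s ^ 2) / ∑ s' : Fin N, ∑ i : Fin K, Q i s' ^ 2) :
    (∀ s, 0 < πLS s) ∧ (∑ s : Fin N, πLS s) = 1 ∧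
      (∀ π : Fin N → ℝ, (∀ s, 0 < π s) → (∑ s : Fin N, π s) = 1 → E πLS ≤ E π) ∧
      E πLS = (1 / (n : ℝ)) *
        ((∑ s : Fin N, ∑ i : Fin K, Q i s ^ 2) ^ 2
          - ∑ i : Fin K, ∑ j : Fin K, ((Q * Qᵀ) i j) ^ 2) := by
  have hcpos : ∀ s : Fin N, 0 < ∑ i : Fin K, Q i s ^ 2 := by
    intro s
    obtain ⟨i, hi⟩ := hQ s
    exact Finset.sum_pos' (fun _ _ => sq_nonneg _) ⟨i, Finset.mem_univ i, by positivity⟩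
  have hTpos : 0 < ∑ s : Fin N, ∑ i : Fin K, Q i s ^ 2 :=
    Finset.sum_pos (fun s _ => hcpos s) ⟨⟨0, hN⟩, Finset.mem_univ _⟩
  have hπLSpos : ∀ s, 0 < πLS s := by
    intro s; rw [hπLS s]; exact div_pos (hcpos s) hTpos
  have hπLSsum : ∑ s : Fin N, πLS s = 1 := by
    rw [Finset.sum_congr rfl fun s _ => hπLS s, ← Finset.sum_div]
    exact div_self hTpos.ne'
  have Eformula : ∀ π : Fin N → ℝ, (∀ s, 0 < π s) → (∑ s : Fin N, π s) = 1 →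
      E π = (1 / (n : ℝ)) *
        ((∑ s : Fin N, (∑ i : Fin K, Q i s ^ 2) ^ 2 / π s)
          - ∑ i : Fin K, ∑ j : Fin K, ((Q * Qᵀ) i j) ^ 2) := by
    intro π hp hs
    rw [hE π]
    calc ∑ u : Fin n → Fin N, (∏ t : Fin n, π (u t)) *
          ∑ i : Fin K, ∑ j : Fin K,
            ((∑ t : Fin n, (1 / ((n : ℝ) * π (u t))) * (Q i (u t) * Q j (u t)))
              - (Q * Qᵀ) i j) ^ 2
        = ∑ u : Fin n → Fin N, ∑ i : Fin K, ∑ j : Fin K, (∏ t : Fin n, π (u t)) *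
            ((∑ t : Fin n, (1 / ((n : ℝ) * π (u t))) * (Q i (u t) * Q j (u t)))
              - (Q * Qᵀ) i j) ^ 2 := by
          refine Finset.sum_congr rfl fun u _ => ?_
          rw [Finset.mul_sum]
          exact Finset.sum_congr rfl fun i _ => Finset.mul_sum _ _ _
      _ = ∑ i : Fin K, ∑ j : Fin K, ∑ u : Fin n → Fin N, (∏ t : Fin n, π (u t)) *
            ((∑ t : Fin n, (1 / ((n : ℝ) * π (u t))) * (Q i (u t) * Q j (u t)))
              - (Q * Qᵀ) i j) ^ 2 := by
          rw [Finset.sum_comm]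
          exact Finset.sum_congr rfl fun i _ => Finset.sum_comm
      _ = ∑ i : Fin K, ∑ j : Fin K, (1 / (n : ℝ)) *
            ((∑ s : Fin N, (Q i s * Q j s) ^ 2 / π s) - ((Q * Qᵀ) i j) ^ 2) := by
          refine Finset.sum_congr rfl fun i _ => Finset.sum_congr rfl fun j _ => ?_
          have hM : (Q * Qᵀ) i j = ∑ s : Fin N, Q i s * Q j s := by
            simp [Matrix.mul_apply, Matrix.transpose_apply]
          rw [hM]
          exact inner_eval hn hp hs (fun s => Q i s * Q j s)
      _ = (1 / (n : ℝ)) * ((∑ s : Fin N, (∑ i : Fin K, Q i s ^ 2) ^ 2 / π s)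
            - ∑ i : Fin K, ∑ j : Fin K, ((Q * Qᵀ) i j) ^ 2) := by
          have hA : ∑ i : Fin K, ∑ j : Fin K, ∑ s : Fin N, (Q i s * Q j s) ^ 2 / π s
              = ∑ s : Fin N, (∑ i : Fin K, Q i s ^ 2) ^ 2 / π s := by
            calc ∑ i : Fin K, ∑ j : Fin K, ∑ s : Fin N, (Q i s * Q j s) ^ 2 / π s
                = ∑ i : Fin K, ∑ s : Fin N, ∑ j : Fin K, (Q i s * Q j s) ^ 2 / π s :=
                  Finset.sum_congr rfl fun i _ => Finset.sum_comm
              _ = ∑ s : Fin N, ∑ i : Fin K, ∑ j : Fin K, (Q i s * Q j s) ^ 2 / π s :=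
                  Finset.sum_comm
              _ = ∑ s : Fin N, (∑ i : Fin K, Q i s ^ 2) ^ 2 / π s := by
                  refine Finset.sum_congr rfl fun s _ => ?_
                  calc ∑ i : Fin K, ∑ j : Fin K, (Q i s * Q j s) ^ 2 / π s
                      = ∑ i : Fin K, Q i s ^ 2 * ∑ j : Fin K, (Q j s ^ 2 / π s) := by
                        refine Finset.sum_congr rfl fun i _ => ?_
                        rw [Finset.mul_sum]
                        exact Finset.sum_congr rfl fun j _ => by
                          rw [mul_pow, mul_div_assoc]
                    _ = (∑ i : Fin K, Q i s ^ 2) * ∑ j : Fin K, (Q j s ^ 2 / π s) :=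
                        (Finset.sum_mul _ _ _).symm
                    _ = (∑ i : Fin K, Q i s ^ 2) ^ 2 / π s := by
                        rw [← Finset.sum_div, sq, mul_div_assoc]
          calc ∑ i : Fin K, ∑ j : Fin K, (1 / (n : ℝ)) *
                ((∑ s : Fin N, (Q i s * Q j s) ^ 2 / π s) - ((Q * Qᵀ) i j) ^ 2)
              = (1 / (n : ℝ)) * ∑ i : Fin K, ∑ j : Fin K,
                ((∑ s : Fin N, (Q i s * Q j s) ^ 2 / π s) - ((Q * Qᵀ) i j) ^ 2) := by
                rw [Finset.mul_sum]
                exact Finset.sum_congr rfl fun i _ => (Finset.mul_sum _ _ _).symm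
            _ = (1 / (n : ℝ)) * ((∑ i : Fin K, ∑ j : Fin K, ∑ s : Fin N, (Q i s * Q j s) ^ 2 / π s)
                  - ∑ i : Fin K, ∑ j : Fin K, ((Q * Qᵀ) i j) ^ 2) := by
                congr 1
                rw [← Finset.sum_sub_distrib]
                exact Finset.sum_congr rfl fun i _ => by rw [Finset.sum_sub_distrib]
            _ = (1 / (n : ℝ)) * ((∑ s : Fin N, (∑ i : Fin K, Q i s ^ 2) ^ 2 / π s)
                  - ∑ i : Fin K, ∑ j : Fin K, ((Q * Qᵀ) i j) ^ 2) := by rw [hA]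
  have hLS : ∑ s : Fin N, (∑ i : Fin K, Q i s ^ 2) ^ 2 / πLS s
      = (∑ s : Fin N, ∑ i : Fin K, Q i s ^ 2) ^ 2 := by
    calc ∑ s : Fin N, (∑ i : Fin K, Q i s ^ 2) ^ 2 / πLS s
        = ∑ s : Fin N, (∑ i : Fin K, Q i s ^ 2) * (∑ s' : Fin N, ∑ i : Fin K, Q i s' ^ 2) := by
          refine Finset.sum_congr rfl fun s _ => ?_
          have hcs := (hcpos s).ne'
          rw [hπLS s, div_div_eq_mul_div, sq, mul_assoc, mul_div_cancel_left₀ _ hcs]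
      _ = (∑ s : Fin N, ∑ i : Fin K, Q i s ^ 2) ^ 2 := by
          rw [← Finset.sum_mul, sq]
  refine ⟨hπLSpos, hπLSsum, ?_, ?_⟩
  · intro π hp hs
    rw [Eformula πLS hπLSpos hπLSsum, Eformula π hp hs, hLS]
    have key : (∑ s : Fin N, ∑ i : Fin K, Q i s ^ 2) ^ 2
        ≤ ∑ s : Fin N, (∑ i : Fin K, Q i s ^ 2) ^ 2 / π s := by
      have h := Finset.sq_sum_div_le_sum_sq_div Finset.univ
        (fun s : Fin N => ∑ i : Fin K, Q i s ^ 2) (fun s _ => hp s)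
      rwa [hs, div_one] at h
    have h1n : (0 : ℝ) ≤ 1 / (n : ℝ) := by positivity
    exact mul_le_mul_of_nonneg_left (sub_le_sub_right key _) h1n
  · rw [Eformula πLS hπLSpos hπLSsum, hLS]
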